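/- The function α ↦ ω_C(α,3) + α·log₂(8/7) is monotone nondecreasing on (0,∞), and there exists α_u with 10.12 < α_u < 10.13 such that ω_C(α_u,3) + α_u·log₂(8/7) = 2. (α_u is the threshold above which the average DPLL-UC search-tree size equals the average #DPLL-UC tree size to exponential order; the equation is ω_C(α,3) = 2 + α·log₂(1 − 2^{−3}).) -/

import Mathlib

/-- Ω(t,α,3) = t + α·log₂(1 − (3/8)t² + (1/4)t³) -/
noncomputable def Omega3 (t α : ℝ) : ℝ :=
  t + α * Real.logb 2 (1 - (3 / 8) * t ^ 2 + (1 / 4) * t ^ 3)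

/-- ω_C(α,3) = sup_{t∈[0,1]} Ω(t,α,3) -/
noncomputable def omegaC3 (α : ℝ) : ℝ :=
  sSup ((fun t => Omega3 t α) '' Set.Icc (0 : ℝ) 1)

/-! Write `c = log₂(8/7)` and `q(t) = 1 − 3t²/8 + t³/4`, which lies in `[7/8, 1]` on `[0, 1]`.
Then `Ω(t, α) + α c = t + α log₂((8/7) q(t))` is affine in `α` with slope in `[0, c]`, while
`Ω(t, ·)` itself is nonincreasing; passing to the supremum over `t`, `F(α) = ω_C(α, 3) + α c` is
nondecreasing and `c`-Lipschitz. The intermediate value theorem then gives the threshold once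
`F(10.12) < 2 < F(10.13)`. For the upper bound, the tangent line of `log` at
`57/50 ≈ (8/7) q(1/10)` (close to the maximiser in `t`) reduces `Ω(t, 10.12) + 10.12 c ≤ 2 − 1/2000`
to a cubic inequality in `t`; the lower bound is the value at `t = 1/10`, where
`(8/7) q(t) = 1993/1750`. -/

open Real Set

namespace Omega3

noncomputable def poly (t : ℝ) : ℝ := 1 - (3 / 8) * t ^ 2 + (1 / 4) * t ^ 3

theorem eq_poly (t α : ℝ) : Omega3 t α = t + α * logb 2 (poly t) := rfl

theorem poly_mem_Icc {t : ℝ} (ht : t ∈ Icc (0 : ℝ) 1) : poly t ∈ Icc (7 / 8 : ℝ) 1 := by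
  obtain ⟨h0, h1⟩ := ht
  constructor <;> unfold poly <;> nlinarith [sq_nonneg (t - 1), sq_nonneg t]

theorem logb_poly_mem_Icc {t : ℝ} (ht : t ∈ Icc (0 : ℝ) 1) :
    logb 2 (poly t) ∈ Icc (-logb 2 (8 / 7)) 0 := by
  obtain ⟨hq₀, hq₁⟩ := poly_mem_Icc ht
  refine ⟨?_, logb_nonpos one_lt_two (by linarith) hq₁⟩
  rw [← logb_inv, show (8 / 7 : ℝ)⁻¹ = 7 / 8 by norm_num]
  exact logb_le_logb_of_le one_lt_two (by norm_num) hq₀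

theorem add_mul_logb_eq {t : ℝ} (ht : t ∈ Icc (0 : ℝ) 1) (α : ℝ) :
    Omega3 t α + α * logb 2 (8 / 7) = t + α * logb 2 (8 / 7 * poly t) := by
  have hq : poly t ≠ 0 := by linarith [(poly_mem_Icc ht).1]
  rw [eq_poly, logb_mul (by norm_num) hq]
  ring

theorem antitone {t : ℝ} (ht : t ∈ Icc (0 : ℝ) 1) : Antitone (Omega3 t) := fun β α hβα => by
  have := (logb_poly_mem_Icc ht).2
  simp only [eq_poly]
  nlinarith

theorem monotone_add_mul {t : ℝ} (ht : t ∈ Icc (0 : ℝ) 1) :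
    Monotone fun α => Omega3 t α + α * logb 2 (8 / 7) := fun β α hβα => by
  have := (logb_poly_mem_Icc ht).1
  simp only [eq_poly]
  nlinarith

theorem le_one_add_abs_mul {t : ℝ} (ht : t ∈ Icc (0 : ℝ) 1) (α : ℝ) :
    Omega3 t α ≤ 1 + |α| * logb 2 (8 / 7) := by
  obtain ⟨hl₀, hl₁⟩ := logb_poly_mem_Icc ht
  have : |logb 2 (poly t)| ≤ logb 2 (8 / 7) := abs_le.2 ⟨hl₀, by linarith⟩
  calc Omega3 t α ≤ 1 + |α * logb 2 (poly t)| := add_le_add ht.2 (le_abs_self _)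
    _ ≤ 1 + |α| * logb 2 (8 / 7) := by rw [abs_mul]; gcongr

end Omega3

open Omega3 in
theorem bddAbove_image_Omega3 (α : ℝ) : BddAbove ((fun t => Omega3 t α) '' Icc (0 : ℝ) 1) :=
  ⟨1 + |α| * logb 2 (8 / 7), by rintro _ ⟨t, ht, rfl⟩; exact le_one_add_abs_mul ht α⟩

theorem Omega3_le_omegaC3 {t : ℝ} (ht : t ∈ Icc (0 : ℝ) 1) (α : ℝ) : Omega3 t α ≤ omegaC3 α :=
  le_csSup (bddAbove_image_Omega3 α) (mem_image_of_mem _ ht)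

theorem omegaC3_le_of_forall {α b : ℝ} (h : ∀ t ∈ Icc (0 : ℝ) 1, Omega3 t α ≤ b) :
    omegaC3 α ≤ b :=
  csSup_le ((nonempty_Icc.2 zero_le_one).image _) (forall_mem_image.2 h)

theorem antitone_omegaC3 : Antitone omegaC3 := fun _ _ hβα =>
  omegaC3_le_of_forall fun _ ht => (Omega3.antitone ht hβα).trans (Omega3_le_omegaC3 ht _)

theorem monotone_omegaC3_add_mul : Monotone fun α => omegaC3 α + α * logb 2 (8 / 7) := by
  intro β α hβα
  suffices omegaC3 β ≤ omegaC3 α + α * logb 2 (8 / 7) - β * logb 2 (8 / 7) by linarith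
  refine omegaC3_le_of_forall fun t ht => ?_
  linarith [Omega3.monotone_add_mul ht hβα, Omega3_le_omegaC3 ht α]

theorem lipschitzWith_omegaC3_add_mul :
    LipschitzWith (logb 2 (8 / 7)).toNNReal fun α => omegaC3 α + α * logb 2 (8 / 7) := by
  have hc : 0 ≤ logb 2 (8 / 7) := logb_nonneg one_lt_two (by norm_num)
  refine LipschitzWith.of_le_add_mul' _ fun α β => ?_
  rcases le_total α β with hαβ | hβα
  · linarith [monotone_omegaC3_add_mul hαβ, mul_nonneg hc (dist_nonneg (x := α) (y := β))]
  · rw [Real.dist_eq, abs_of_nonneg (sub_nonneg.2 hβα)]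
    linarith [antitone_omegaC3 hβα]

theorem log_le_log_add_div_sub_one {a x : ℝ} (ha : 0 < a) (hx : 0 < x) :
    log x ≤ log a + x / a - 1 := by
  have := log_le_sub_one_of_pos (div_pos hx ha)
  rw [log_div hx.ne' ha.ne'] at this
  linarith

theorem log_57_div_50_lt : log (57 / 50) < 19 / 145 := by
  have hpow : (57 / 50 : ℝ) ^ 145 < exp 1 ^ 19 := calc
    (57 / 50 : ℝ) ^ 145 < 2.7182818283 ^ 19 := by
      rw [div_pow, div_lt_iff₀ (by positivity)]; norm_num
    _ < exp 1 ^ 19 := by gcongr; exact exp_one_gt_d9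
  rw [← exp_nat_mul, mul_one] at hpow
  have := log_lt_log (by positivity) hpow
  rw [log_pow, log_exp] at this
  push_cast at this
  linarith

theorem mul_logb_two_le_tangent {x : ℝ} (hx : 1 ≤ x) :
    0.6931471803 * logb 2 x ≤ 19 / 145 + 50 / 57 * x - 1 := by
  have htan : log x ≤ 19 / 145 + 50 / 57 * x - 1 := by
    have := log_le_log_add_div_sub_one (a := 57 / 50) (by norm_num) (by linarith)
    linarith [log_57_div_50_lt]
  calc 0.6931471803 * logb 2 x ≤ log 2 * logb 2 x :=
        mul_le_mul_of_nonneg_right log_two_gt_d9.le (logb_nonneg one_lt_two hx)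
    _ = log x := by rw [logb, mul_div_cancel₀ _ (log_pos one_lt_two).ne']
    _ ≤ _ := htan

theorem omegaC3_10_12_add_mul_lt_two : omegaC3 10.12 + 10.12 * logb 2 (8 / 7) < 2 := by
  suffices omegaC3 10.12 ≤ 2 - 1 / 2000 - 10.12 * logb 2 (8 / 7) by linarith
  refine omegaC3_le_of_forall fun t ht => ?_
  obtain ⟨hq₀, hq₁⟩ := Omega3.poly_mem_Icc ht
  have hlog := mul_logb_two_le_tangent (x := 8 / 7 * Omega3.poly t) (by linarith)
  have hpoly : 10.12 * (19 / 145 + 50 / 57 * (8 / 7 * Omega3.poly t) - 1)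
      ≤ (2 - 1 / 2000 - t) * 0.6931471803 := by
    obtain ⟨ht₀, ht₁⟩ := ht
    unfold Omega3.poly
    nlinarith [mul_nonneg ht₀ (sq_nonneg (t - 101 / 1000)),
      mul_nonneg (sub_nonneg.2 ht₁) (sq_nonneg (t - 101 / 1000))]
  linarith [Omega3.add_mul_logb_eq ht 10.12]

theorem lt_logb_two_1993_div_1750 : 190 / 1013 < logb 2 (1993 / 1750) := by
  have hpow : (2 : ℝ) ^ 190 < (1993 / 1750) ^ 1013 := by
    rw [div_pow, lt_div_iff₀ (by positivity)]
    exact_mod_cast (show (2 : ℕ) ^ 190 * 1750 ^ 1013 < 1993 ^ 1013 by decide +kernel)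
  have := logb_lt_logb (b := 2) one_lt_two (by positivity) hpow
  rw [logb_pow, logb_pow, logb_self_eq_one one_lt_two] at this
  push_cast at this
  linarith

theorem two_lt_omegaC3_10_13_add_mul : 2 < omegaC3 10.13 + 10.13 * logb 2 (8 / 7) := by
  have hmem : (1 / 10 : ℝ) ∈ Icc (0 : ℝ) 1 := by norm_num
  have h := Omega3.add_mul_logb_eq hmem 10.13
  rw [show 8 / 7 * Omega3.poly (1 / 10) = 1993 / 1750 by norm_num [Omega3.poly]] at h
  linarith [Omega3_le_omegaC3 hmem 10.13, lt_logb_two_1993_div_1750]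

theorem omegaC3_threshold :
    MonotoneOn (fun α : ℝ => omegaC3 α + α * Real.logb 2 (8 / 7)) (Set.Ioi (0 : ℝ)) ∧
    ∃ αu : ℝ, 10.12 < αu ∧ αu < 10.13 ∧
      omegaC3 αu + αu * Real.logb 2 (8 / 7) = 2 := by
  refine ⟨monotone_omegaC3_add_mul.monotoneOn _, ?_⟩
  obtain ⟨αu, ⟨hlo, hhi⟩, hαu⟩ := intermediate_value_Ioo (by norm_num)
    lipschitzWith_omegaC3_add_mul.continuous.continuousOn
    ⟨omegaC3_10_12_add_mul_lt_two, two_lt_omegaC3_10_13_add_mul⟩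
  exact ⟨αu, hlo, hhi, hαu⟩
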